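/- The QNL quadratic form Q^qnl is positive definite on U (i.e., Q^qnl(u) > 0 for every u ∈ U with u ≠ 0) if and only if A_F > 0. -/

import Mathlib

open Finset

noncomputable section

/-- `u` is `2N`-periodic. -/
def IsPer (N : ℤ) (u : ℤ → ℝ) : Prop := ∀ ℓ : ℤ, u (ℓ + 2*N) = u ℓ

/-- `u` belongs to the displacement space `U`: `2N`-periodic with zero mean. -/
def InU (N : ℤ) (u : ℤ → ℝ) : Prop :=
  IsPer N u ∧ ∑ ℓ ∈ Finset.Icc (-N+1) N, u ℓ = 0

/-- the scaled reference atomic spacing `ε = 1/N`. -/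
def eps (N : ℤ) : ℝ := 1 / (N : ℝ)

/-- discrete derivative `(Dv)_ℓ = (v_ℓ - v_{ℓ-1})/ε`. -/
def Dd (N : ℤ) (v : ℤ → ℝ) : ℤ → ℝ := fun ℓ => (v ℓ - v (ℓ-1)) / eps N

/-- squared `ℓ²ε` norm: `ε Σ_{ℓ=-N+1}^{N} v_ℓ²`. -/
def nrm2 (N : ℤ) (v : ℤ → ℝ) : ℝ := eps N * ∑ ℓ ∈ Finset.Icc (-N+1) N, (v ℓ)^2

/-- `Ã_F = φ''_F + 4φ''_{2F}`. -/
def Atil (pF p2F : ℝ) : ℝ := pF + 4*p2F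

/-- `Â_F = 4G''_F(ρ'_F+2ρ'_{2F})² + 2G'_F(ρ''_F+4ρ''_{2F})`. -/
def Ahat (rF r2F rrF rr2F g1 g2 : ℝ) : ℝ := 4*g2*(rF + 2*r2F)^2 + 2*g1*(rrF + 4*rr2F)

/-- `A_F = Â_F + Ã_F`. -/
def AFc (pF p2F rF r2F rrF rr2F g1 g2 : ℝ) : ℝ := Ahat rF r2F rrF rr2F g1 g2 + Atil pF p2F

/-- `B_F`. -/
def BFc (p2F rF r2F rr2F g1 g2 : ℝ) : ℝ :=
  -(p2F + g2*(rF^2 + 20*r2F^2 + 12*rF*r2F) + 2*g1*rr2F)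

/-- `C_F`. -/
def CFc (rF r2F g2 : ℝ) : ℝ := g2*(8*r2F^2 + 2*rF*r2F)

/-- `D_F`. -/
def DFc (r2F g2 : ℝ) : ℝ := -(g2*r2F^2)

/-- `λ_F(s) = A_F + B_F s + C_F s² + D_F s³`. -/
def lamF (pF p2F rF r2F rrF rr2F g1 g2 s : ℝ) : ℝ :=
  AFc pF p2F rF r2F rrF rr2F g1 g2 + BFc p2F rF r2F rr2F g1 g2 * s
    + CFc rF r2F g2 * s^2 + DFc r2F g2 * s^3

/-- per-atom atomistic contribution `q^a_ℓ(u)`. -/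
def qaAtom (N : ℤ) (pF p2F rF r2F rrF rr2F g1 g2 : ℝ) (u : ℤ → ℝ) (ℓ : ℤ) : ℝ :=
  g2 * (rF * (Dd N u ℓ + Dd N u (ℓ+1))
      + r2F * (Dd N u (ℓ-1) + Dd N u ℓ + Dd N u (ℓ+1) + Dd N u (ℓ+2)))^2
   + g1 * (rrF * (Dd N u ℓ)^2 + rr2F * (Dd N u ℓ + Dd N u (ℓ-1))^2
         + rrF * (Dd N u (ℓ+1))^2 + rr2F * (Dd N u (ℓ+1) + Dd N u (ℓ+2))^2)
   + (1/2) * (pF * ((Dd N u ℓ)^2 + (Dd N u (ℓ+1))^2)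
         + p2F * ((Dd N u ℓ + Dd N u (ℓ-1))^2 + (Dd N u (ℓ+1) + Dd N u (ℓ+2))^2))

/-- interfacial contribution `q^i` with index triple `(a,b,c)`. -/
def qiAtom (N : ℤ) (pF p2F rF r2F rrF rr2F g1 g2 : ℝ) (u : ℤ → ℝ) (a b c : ℤ) : ℝ :=
  2*g2*(rF * Dd N u b + r2F*(Dd N u b + Dd N u a))^2
  + g1*(rrF*(Dd N u b)^2 + rr2F*(Dd N u b + Dd N u a)^2)
  + (2*g2*(rF + 2*r2F)^2 + g1*(rrF + 4*rr2F))*(Dd N u c)^2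
  + (1/2)*(pF*((Dd N u b)^2 + (Dd N u c)^2) + p2F*((Dd N u b + Dd N u a)^2 + 4*(Dd N u c)^2))

/-- continuum contribution `q^c_ℓ(u) = (A_F/2)((u'_ℓ)² + (u'_{ℓ+1})²)`. -/
def qcAtom (N : ℤ) (pF p2F rF r2F rrF rr2F g1 g2 : ℝ) (u : ℤ → ℝ) (ℓ : ℤ) : ℝ :=
  (AFc pF p2F rF r2F rrF rr2F g1 g2 / 2) * ((Dd N u ℓ)^2 + (Dd N u (ℓ+1))^2)

/-- the QNL second-variation quadratic form `Q^qnl`. -/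
def Qqnl (N K : ℤ) (pF p2F rF r2F rrF rr2F g1 g2 : ℝ) (u : ℤ → ℝ) : ℝ :=
  eps N * ((∑ ℓ ∈ Finset.Icc (-K) K, qaAtom N pF p2F rF r2F rrF rr2F g1 g2 u ℓ)
    + qiAtom N pF p2F rF r2F rrF rr2F g1 g2 u K (K+1) (K+2)
    + qiAtom N pF p2F rF r2F rrF rr2F g1 g2 u (K+1) (K+2) (K+3)
    + qiAtom N pF p2F rF r2F rrF rr2F g1 g2 u (-K+1) (-K) (-K-1)
    + qiAtom N pF p2F rF r2F rrF rr2F g1 g2 u (-K) (-K-1) (-K-2)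
    + ∑ ℓ ∈ (Finset.Icc (-N+1) (-K-3) ∪ Finset.Icc (K+3) N),
        qcAtom N pF p2F rF r2F rrF rr2F g1 g2 u ℓ)

/-!
Away from the atomistic region every site contributes `(A_F/2)((u'_ℓ)² + (u'_{ℓ+1})²)`, and by
periodicity these contributions sum to `A_F ‖u'‖²`. On an atomistic site the excess over this
reference is a difference of a flux (a quadratic form in three consecutive strains) plus a sum of
squares of second differences with coefficients that are nonnegative under (H1) and (H2); the
fluxes telescope, and the two boundary fluxes are absorbed by the interface contributions, again
leaving squares of differences with nonnegative weights. Hence `Q^qnl(u) = ε (A_F ‖u'‖² + R(u))`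
with `R ≥ 0`, which gives sufficiency. Conversely `R(u) = 0` for any `u` that is constant on the
atomistic region and its interfaces, so testing with such a nonconstant `u` shows that `A_F > 0`
is necessary.
-/

section IntervalSums

variable {M : Type*}

theorem Int.sum_Icc_eq_sum_Icc_add_sum_Icc [AddCommMonoid M] (f : ℤ → M) {a b b' c : ℤ}
    (hb : b' = b + 1) (hab : a ≤ b') (hbc : b ≤ c) :
    ∑ ℓ ∈ Icc a c, f ℓ = ∑ ℓ ∈ Icc a b, f ℓ + ∑ ℓ ∈ Icc b' c, f ℓ := by
  rw [← sum_union (disjoint_left.2 fun x hx hx' => by simp only [mem_Icc] at hx hx'; omega)]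
  congr 1
  ext x
  simp only [mem_union, mem_Icc]
  omega

theorem Int.sum_Icc_sub [AddCommGroup M] (f : ℤ → M) {a b : ℤ} (hab : a ≤ b + 1) :
    ∑ ℓ ∈ Icc a b, (f (ℓ + 1) - f ℓ) = f (b + 1) - f a := by
  induction b, (show a - 1 ≤ b by omega) using Int.leInduction with
  | base => simp
  | succ b hab ih =>
    rw [← insert_Icc_right_eq_Icc_add_one (by omega), sum_insert (by simp), ih (by omega)]
    abel

theorem Function.Periodic.sum_Icc_comp_add_one [AddCommGroup M] {f : ℤ → M} {a b c : ℤ}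
    (hf : Function.Periodic f c) (hc : a + c = b + 1) (hab : a ≤ b + 1) :
    ∑ ℓ ∈ Icc a b, f (ℓ + 1) = ∑ ℓ ∈ Icc a b, f ℓ := by
  rw [← sub_eq_zero, ← sum_sub_distrib, Int.sum_Icc_sub f hab, ← hc, hf, sub_self]

end IntervalSums

section Periodic

variable {N : ℤ}

theorem card_Icc_neg_add_one (hN : 0 ≤ N) : ((#(Icc (-N + 1) N) : ℕ) : ℝ) = 2 * N := by
  have h := Int.card_Icc_of_le (-N + 1) N (by omega)
  rw [show N + 1 - (-N + 1) = 2 * N by ring] at h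
  exact_mod_cast h

theorem Dd_periodic {u : ℤ → ℝ} {c : ℤ} (hu : Function.Periodic u c) :
    Function.Periodic (Dd N u) c := fun ℓ => by
  simp only [Dd, hu ℓ, show ℓ + c - 1 = ℓ - 1 + c by ring, hu (ℓ - 1)]

theorem Dd_sub_const (u : ℤ → ℝ) (c : ℝ) : Dd N (fun ℓ => u ℓ - c) = Dd N u := by
  funext ℓ
  simp only [Dd, sub_sub_sub_cancel_right]

theorem InU.eq_zero_of_Dd_eq_zero {u : ℤ → ℝ} (hu : InU N u) (hN : 0 < N)
    (hd : ∀ ℓ ∈ Icc (-N + 1) N, Dd N u ℓ = 0) : u = 0 := by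
  have hε : eps N ≠ 0 := by unfold eps; positivity
  have hstep (ℓ : ℤ) : u ℓ = u (ℓ - 1) := by
    obtain ⟨k, hk, hkℓ⟩ :=
      (Dd_periodic (N := N) hu.1).exists_mem_Ioc (by positivity : (0 : ℤ) < 2 * N) ℓ (-N)
    have h := hd k (by simp only [Set.mem_Ioc] at hk; simp only [mem_Icc]; omega)
    rw [← hkℓ, Dd, div_eq_zero_iff] at h
    exact sub_eq_zero.1 (h.resolve_right hε)
  have hconst (ℓ : ℤ) : u ℓ = u 0 := by
    induction ℓ using Int.induction_on with
    | zero => rfl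
    | succ k ih => rw [hstep, add_sub_cancel_right, ih]
    | pred k ih => rw [← ih, hstep (-(k : ℤ)), sub_eq_add_neg]
  have hmean := hu.2
  rw [sum_congr rfl fun ℓ _ => hconst ℓ, sum_const, nsmul_eq_mul,
    card_Icc_neg_add_one hN.le] at hmean
  have h0 : u 0 = 0 := (mul_eq_zero.1 hmean).resolve_left (by positivity)
  funext ℓ
  rw [hconst, h0, Pi.zero_apply]

theorem InU.sum_sq_Dd_pos {u : ℤ → ℝ} (hu : InU N u) (hN : 0 < N) (hu0 : u ≠ 0) :
    0 < ∑ ℓ ∈ Icc (-N + 1) N, Dd N u ℓ ^ 2 := by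
  refine (sum_nonneg fun ℓ _ => sq_nonneg _).lt_of_ne fun h => hu0 ?_
  refine hu.eq_zero_of_Dd_eq_zero hN fun ℓ hℓ => ?_
  exact pow_eq_zero_iff two_ne_zero |>.1
    ((sum_eq_zero_iff_of_nonneg fun _ _ => sq_nonneg _).1 h.symm ℓ hℓ)

theorem inU_sub_mean (hN : 0 < N) {v : ℤ → ℝ} (hv : IsPer N v) :
    InU N (fun ℓ => v ℓ - (∑ k ∈ Icc (-N + 1) N, v k) / (2 * N)) := by
  refine ⟨fun ℓ => by simp only [hv ℓ], ?_⟩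
  rw [sum_sub_distrib, sum_const, nsmul_eq_mul, card_Icc_neg_add_one hN.le]
  field_simp
  ring

end Periodic

section Remainder

variable (B g2 rF r2F : ℝ)

def bondFlux (x y z : ℝ) : ℝ :=
  (B + g2 * (7 * (rF * r2F) + 12 * r2F ^ 2 + rF ^ 2 / 2)) * (x ^ 2 - z ^ 2)
    + g2 * (6 * (rF * r2F) + 8 * r2F ^ 2 + rF ^ 2) * (x * y - y * z)

def siteRemainder (x y z w : ℝ) : ℝ :=
  B / 2 * ((y - x) ^ 2 + (w - z) ^ 2)
    + g2 * (rF * r2F * ((2 * y - x - z) ^ 2 + (2 * z - y - w) ^ 2)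
      + r2F ^ 2 * ((y + z - x - w) ^ 2 + 2 * (2 * y - x - z) ^ 2 + 2 * (2 * z - y - w) ^ 2))

def interfaceWeight₁ : ℝ := B / 2 + g2 * (rF * r2F + 4 * r2F ^ 2)

def interfaceWeight₂ : ℝ := B / 2 + g2 * (7 * (rF * r2F) + 12 * r2F ^ 2 + rF ^ 2)

def qnlRemainder (N K : ℤ) (u : ℤ → ℝ) : ℝ :=
  ∑ ℓ ∈ Icc (-K) K,
      siteRemainder B g2 rF r2F (Dd N u (ℓ - 1)) (Dd N u ℓ) (Dd N u (ℓ + 1)) (Dd N u (ℓ + 2))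
    + interfaceWeight₁ B g2 rF r2F * (Dd N u (K + 1) - Dd N u K) ^ 2
    + interfaceWeight₂ B g2 rF r2F * (Dd N u (K + 2) - Dd N u (K + 1)) ^ 2
    + interfaceWeight₁ B g2 rF r2F * (Dd N u (-K) - Dd N u (-K + 1)) ^ 2
    + interfaceWeight₂ B g2 rF r2F * (Dd N u (-K - 1) - Dd N u (-K)) ^ 2

theorem bondFlux_swap (x y z : ℝ) : bondFlux B g2 rF r2F z y x = -bondFlux B g2 rF r2F x y z := by
  simp only [bondFlux]
  ring

variable {B g2 rF r2F}

theorem siteRemainder_nonneg (hB : 0 ≤ B) (hg2 : 0 ≤ g2) (hρ : 0 ≤ rF * r2F)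
    (x y z w : ℝ) : 0 ≤ siteRemainder B g2 rF r2F x y z w := by
  unfold siteRemainder
  positivity

theorem interfaceWeight₁_nonneg (hB : 0 ≤ B) (hg2 : 0 ≤ g2) (hρ : 0 ≤ rF * r2F) :
    0 ≤ interfaceWeight₁ B g2 rF r2F := by
  unfold interfaceWeight₁
  positivity

theorem interfaceWeight₂_nonneg (hB : 0 ≤ B) (hg2 : 0 ≤ g2) (hρ : 0 ≤ rF * r2F) :
    0 ≤ interfaceWeight₂ B g2 rF r2F := by
  unfold interfaceWeight₂
  positivity

theorem qnlRemainder_nonneg (hB : 0 ≤ B) (hg2 : 0 ≤ g2) (hρ : 0 ≤ rF * r2F)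
    (N K : ℤ) (u : ℤ → ℝ) : 0 ≤ qnlRemainder B g2 rF r2F N K u := by
  have h₁ := interfaceWeight₁_nonneg hB hg2 hρ
  have h₂ := interfaceWeight₂_nonneg hB hg2 hρ
  unfold qnlRemainder
  have := sum_nonneg fun ℓ (_ : ℓ ∈ Icc (-K) K) => siteRemainder_nonneg hB hg2 hρ
    (Dd N u (ℓ - 1)) (Dd N u ℓ) (Dd N u (ℓ + 1)) (Dd N u (ℓ + 2))
  positivity

theorem qnlRemainder_eq_zero {N K : ℤ} (hK0 : 0 ≤ K) {u : ℤ → ℝ}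
    (hu : ∀ ℓ ∈ Icc (-K - 1) (K + 2), Dd N u ℓ = 0) : qnlRemainder B g2 rF r2F N K u = 0 := by
  have hu' (ℓ : ℤ) (h₁ : -K - 1 ≤ ℓ) (h₂ : ℓ ≤ K + 2) : Dd N u ℓ = 0 := hu ℓ (mem_Icc.2 ⟨h₁, h₂⟩)
  rw [qnlRemainder, sum_eq_zero fun ℓ hℓ => by
    rw [mem_Icc] at hℓ
    rw [hu' (ℓ - 1) (by omega) (by omega), hu' ℓ (by omega) (by omega),
      hu' (ℓ + 1) (by omega) (by omega), hu' (ℓ + 2) (by omega) (by omega), siteRemainder]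
    ring]
  rw [hu' K (by omega) (by omega), hu' (K + 1) (by omega) (by omega),
    hu' (K + 2) (by omega) (by omega), hu' (-K) (by omega) (by omega),
    hu' (-K + 1) (by omega) (by omega), hu' (-K - 1) (by omega) (by omega)]
  ring

end Remainder

section Decomposition

theorem sum_Icc_eq_sum_regions {M : Type*} [AddCommMonoid M] (f : ℤ → M) {N K : ℤ}
    (hK0 : 0 ≤ K) (hKN : K + 3 ≤ N) :
    ∑ ℓ ∈ Icc (-N + 1) N, f ℓ
      = ∑ ℓ ∈ Icc (-N + 1) (-K - 3), f ℓ + (f (-K - 2) + f (-K - 1)) + ∑ ℓ ∈ Icc (-K) K, f ℓ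
        + (f (K + 1) + f (K + 2)) + ∑ ℓ ∈ Icc (K + 3) N, f ℓ := by
  rw [Int.sum_Icc_eq_sum_Icc_add_sum_Icc f (a := -N + 1) (b := -K - 3) (b' := -K - 2) (c := N)
      (by omega) (by omega) (by omega),
    Int.sum_Icc_eq_sum_Icc_add_sum_Icc f (a := -K - 2) (b := -K - 2) (b' := -K - 1) (c := N)
      (by omega) (by omega) (by omega),
    Int.sum_Icc_eq_sum_Icc_add_sum_Icc f (a := -K - 1) (b := -K - 1) (b' := -K) (c := N)
      (by omega) (by omega) (by omega),
    Int.sum_Icc_eq_sum_Icc_add_sum_Icc f (a := -K) (b := K) (b' := K + 1) (c := N)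
      (by omega) (by omega) (by omega),
    Int.sum_Icc_eq_sum_Icc_add_sum_Icc f (a := K + 1) (b := K + 1) (b' := K + 2) (c := N)
      (by omega) (by omega) (by omega),
    Int.sum_Icc_eq_sum_Icc_add_sum_Icc f (a := K + 2) (b := K + 2) (b' := K + 3) (c := N)
      (by omega) (by omega) (by omega)]
  simp only [Icc_self, sum_singleton]
  abel

theorem IsPer.sum_Dd_sq_add_Dd_succ_sq {N : ℤ} {u : ℤ → ℝ} (hu : IsPer N u) (hN : 0 ≤ N) :
    ∑ ℓ ∈ Icc (-N + 1) N, (Dd N u ℓ ^ 2 + Dd N u (ℓ + 1) ^ 2)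
      = 2 * ∑ ℓ ∈ Icc (-N + 1) N, Dd N u ℓ ^ 2 := by
  have hd : Function.Periodic (fun ℓ => Dd N u ℓ ^ 2) (2 * N) := fun ℓ => by
    simp only [Dd_periodic hu ℓ]
  rw [sum_add_distrib, hd.sum_Icc_comp_add_one (by ring) (by omega)]
  ring

variable (N : ℤ) (pF p2F rF r2F rrF rr2F g1 g2 : ℝ) (u : ℤ → ℝ)

theorem qaAtom_eq (ℓ : ℤ) :
    qaAtom N pF p2F rF r2F rrF rr2F g1 g2 u ℓ
      = AFc pF p2F rF r2F rrF rr2F g1 g2 / 2 * (Dd N u ℓ ^ 2 + Dd N u (ℓ + 1) ^ 2)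
        + (bondFlux (BFc p2F rF r2F rr2F g1 g2) g2 rF r2F
              (Dd N u ℓ) (Dd N u (ℓ + 1)) (Dd N u (ℓ + 2))
            - bondFlux (BFc p2F rF r2F rr2F g1 g2) g2 rF r2F
              (Dd N u (ℓ - 1)) (Dd N u ℓ) (Dd N u (ℓ + 1)))
        + siteRemainder (BFc p2F rF r2F rr2F g1 g2) g2 rF r2F
            (Dd N u (ℓ - 1)) (Dd N u ℓ) (Dd N u (ℓ + 1)) (Dd N u (ℓ + 2)) := by
  simp only [qaAtom, AFc, Ahat, Atil, BFc, bondFlux, siteRemainder]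
  ring

theorem sum_qaAtom_eq {K : ℤ} (hK0 : 0 ≤ K) :
    ∑ ℓ ∈ Icc (-K) K, qaAtom N pF p2F rF r2F rrF rr2F g1 g2 u ℓ
      = AFc pF p2F rF r2F rrF rr2F g1 g2 / 2 * ∑ ℓ ∈ Icc (-K) K, (Dd N u ℓ ^ 2 + Dd N u (ℓ + 1) ^ 2)
        + (bondFlux (BFc p2F rF r2F rr2F g1 g2) g2 rF r2F
              (Dd N u K) (Dd N u (K + 1)) (Dd N u (K + 2))
            - bondFlux (BFc p2F rF r2F rr2F g1 g2) g2 rF r2F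
              (Dd N u (-K - 1)) (Dd N u (-K)) (Dd N u (-K + 1)))
        + ∑ ℓ ∈ Icc (-K) K, siteRemainder (BFc p2F rF r2F rr2F g1 g2) g2 rF r2F
            (Dd N u (ℓ - 1)) (Dd N u ℓ) (Dd N u (ℓ + 1)) (Dd N u (ℓ + 2)) := by
  have htele := Int.sum_Icc_sub (fun ℓ =>
    bondFlux (BFc p2F rF r2F rr2F g1 g2) g2 rF r2F (Dd N u (ℓ - 1)) (Dd N u ℓ) (Dd N u (ℓ + 1)))
    (a := -K) (b := K) (by omega)
  simp only [add_sub_cancel_right, add_assoc, one_add_one_eq_two] at htele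
  rw [sum_congr rfl fun ℓ _ => qaAtom_eq N pF p2F rF r2F rrF rr2F g1 g2 u ℓ, sum_add_distrib,
    sum_add_distrib, ← mul_sum, htele]

theorem qiAtom_add_qiAtom (i j k l : ℤ) :
    qiAtom N pF p2F rF r2F rrF rr2F g1 g2 u i j k + qiAtom N pF p2F rF r2F rrF rr2F g1 g2 u j k l
      = AFc pF p2F rF r2F rrF rr2F g1 g2 / 2 * (Dd N u j ^ 2 + Dd N u k ^ 2)
        + AFc pF p2F rF r2F rrF rr2F g1 g2 / 2 * (Dd N u k ^ 2 + Dd N u l ^ 2)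
        + interfaceWeight₁ (BFc p2F rF r2F rr2F g1 g2) g2 rF r2F * (Dd N u j - Dd N u i) ^ 2
        + interfaceWeight₂ (BFc p2F rF r2F rr2F g1 g2) g2 rF r2F * (Dd N u k - Dd N u j) ^ 2
        - bondFlux (BFc p2F rF r2F rr2F g1 g2) g2 rF r2F (Dd N u i) (Dd N u j) (Dd N u k) := by
  simp only [qiAtom, AFc, Ahat, Atil, BFc, bondFlux, interfaceWeight₁, interfaceWeight₂]
  ring

theorem Qqnl_eq {K : ℤ} (hK0 : 0 ≤ K) (hKN : K + 3 ≤ N) (hu : IsPer N u) :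
    Qqnl N K pF p2F rF r2F rrF rr2F g1 g2 u
      = eps N * (AFc pF p2F rF r2F rrF rr2F g1 g2 * ∑ ℓ ∈ Icc (-N + 1) N, Dd N u ℓ ^ 2
        + qnlRemainder (BFc p2F rF r2F rr2F g1 g2) g2 rF r2F N K u) := by
  have hatom := sum_qaAtom_eq N pF p2F rF r2F rrF rr2F g1 g2 u hK0
  have hright := qiAtom_add_qiAtom N pF p2F rF r2F rrF rr2F g1 g2 u K (K + 1) (K + 2) (K + 3)
  have hleft := qiAtom_add_qiAtom N pF p2F rF r2F rrF rr2F g1 g2 u (-K + 1) (-K) (-K - 1) (-K - 2)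
  rw [bondFlux_swap] at hleft
  have hsplit := sum_Icc_eq_sum_regions (fun ℓ => Dd N u ℓ ^ 2 + Dd N u (ℓ + 1) ^ 2) hK0 hKN
  simp only [show -K - 2 + 1 = -K - 1 by ring, show -K - 1 + 1 = -K by ring,
    show K + 1 + 1 = K + 2 by ring, show K + 2 + 1 = K + 3 by ring] at hsplit
  have hperiod := hu.sum_Dd_sq_add_Dd_succ_sq (by omega)
  have hcont :
      ∑ ℓ ∈ Icc (-N + 1) (-K - 3) ∪ Icc (K + 3) N, qcAtom N pF p2F rF r2F rrF rr2F g1 g2 u ℓ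
      = AFc pF p2F rF r2F rrF rr2F g1 g2 / 2
        * (∑ ℓ ∈ Icc (-N + 1) (-K - 3), (Dd N u ℓ ^ 2 + Dd N u (ℓ + 1) ^ 2)
          + ∑ ℓ ∈ Icc (K + 3) N, (Dd N u ℓ ^ 2 + Dd N u (ℓ + 1) ^ 2)) := by
    rw [sum_union (disjoint_left.2 fun x hx hx' => by simp only [mem_Icc] at hx hx'; omega),
      mul_add, mul_sum, mul_sum]
    rfl
  rw [Qqnl, qnlRemainder, hatom, hcont]
  linear_combination eps N * (hright + hleft
    + AFc pF p2F rF r2F rrF rr2F g1 g2 / 2 * (hperiod - hsplit))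

end Decomposition

theorem exists_inU_ne_zero_Dd_eq_zero {N K : ℤ} (hK0 : 0 ≤ K) (hKN : K + 3 ≤ N) :
    ∃ u, InU N u ∧ u ≠ 0 ∧ ∀ ℓ ∈ Icc (-K - 1) (K + 2), Dd N u ℓ = 0 := by
  have hN : 0 < N := by omega
  set v : ℤ → ℝ := fun ℓ => if (ℓ + N) % (2 * N) = 0 then 1 else 0 with hv
  have hv_per : IsPer N v := fun ℓ => by
    simp only [hv, show ℓ + 2 * N + N = ℓ + N + 2 * N by ring, Int.add_emod_right]
  have hv_zero (ℓ : ℤ) (h₁ : -N + 1 ≤ ℓ) (h₂ : ℓ ≤ N - 1) : v ℓ = 0 := by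
    simp only [hv, Int.emod_eq_of_lt (by omega : 0 ≤ ℓ + N) (by omega : ℓ + N < 2 * N)]
    exact if_neg (by omega)
  have hv_N : v N = 1 := by
    simp only [hv, show N + N = 2 * N by ring, Int.emod_self, if_true]
  refine ⟨_, inU_sub_mean hN hv_per, fun h => ?_, fun ℓ hℓ => ?_⟩
  · have h₁ := congrFun h N
    have h₂ := congrFun h (N - 1)
    simp only [hv_N, hv_zero (N - 1) (by omega) le_rfl, Pi.zero_apply] at h₁ h₂
    linarith
  · rw [mem_Icc] at hℓ
    rw [Dd_sub_const, Dd, hv_zero ℓ (by omega) (by omega), hv_zero (ℓ - 1) (by omega) (by omega),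
      sub_self, zero_div]

theorem qnl_sharp_stability_general (N K : ℤ) (hK0 : 0 ≤ K) (hKN : K + 3 ≤ N)
    (pF p2F rF r2F rrF rr2F g1 g2 : ℝ)
    (hH1c : rF ≤ 0) (hH1d : r2F ≤ 0) (hH1g : 0 ≤ g2)
    (hH2 : 0 ≤ BFc p2F rF r2F rr2F g1 g2) :
    (∀ u : ℤ → ℝ, InU N u → u ≠ 0 → 0 < Qqnl N K pF p2F rF r2F rrF rr2F g1 g2 u)
    ↔ 0 < AFc pF p2F rF r2F rrF rr2F g1 g2 := by
  have hN : 0 < N := by omega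
  have hε : 0 < eps N := one_div_pos.2 (Int.cast_pos.2 hN)
  constructor
  · intro hQ
    obtain ⟨u, hu, hu0, hflat⟩ := exists_inU_ne_zero_Dd_eq_zero hK0 hKN
    have hQu := hQ u hu hu0
    rw [Qqnl_eq N pF p2F rF r2F rrF rr2F g1 g2 u hK0 hKN hu.1, qnlRemainder_eq_zero hK0 hflat,
      add_zero] at hQu
    exact pos_of_mul_pos_left (pos_of_mul_pos_right hQu hε.le) (hu.sum_sq_Dd_pos hN hu0).le
  · intro hA u hu hu0
    rw [Qqnl_eq N pF p2F rF r2F rrF rr2F g1 g2 u hK0 hKN hu.1]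
    have hR := qnlRemainder_nonneg hH2 hH1g (mul_nonneg_of_nonpos_of_nonpos hH1c hH1d) N K u
    have hA' := mul_pos hA (hu.sum_sq_Dd_pos hN hu0)
    positivity

/-- sharp stability of the EAM-QNL model. -/
theorem qnl_sharp_stability (N K : ℤ) (hK0 : 0 ≤ K) (hKN : K + 3 ≤ N)
    (pF p2F rF r2F rrF rr2F g1 g2 : ℝ)
    (hH1a : 0 < pF) (hH1b : p2F < 0) (hH1c : rF ≤ 0) (hH1d : r2F ≤ 0)
    (hH1e : 0 ≤ rrF) (hH1f : 0 ≤ rr2F) (hH1g : 0 ≤ g2)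
    (hH2 : 0 ≤ BFc p2F rF r2F rr2F g1 g2) :
    (∀ u : ℤ → ℝ, InU N u → u ≠ 0 → 0 < Qqnl N K pF p2F rF r2F rrF rr2F g1 g2 u)
    ↔ 0 < AFc pF p2F rF r2F rrF rr2F g1 g2 :=
  qnl_sharp_stability_general N K hK0 hKN pF p2F rF r2F rrF rr2F g1 g2 hH1c hH1d hH1g hH2
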